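/- Let V ⊆ ℂⁿ be open and bounded, Φ : V → ℝ continuous, Ψ̃ : V × V → ℂ continuous, C₀ > 0 and M > 0, with Re Ψ̃(y,y) = Φ(y) for all y ∈ V and 2 Re Ψ̃(x,y) ≤ Φ(x) + Φ(y) − (1/C₀)|x−y|² for all x, y ∈ V. Let b : V × V → ℂ be measurable with |b| ≤ M and define Π̃u(x) := h^{−n} ∫_V e^{(2/h)(Ψ̃(x,y) − Ψ̃(y,y))} b(x,y) u(y) dL(y). Let ψ₁ : V → ℝ be continuous with ψ₁ ≥ 0, set ψ₂(x) := inf_{y∈V} (|x−y|²/(2C₀) + ψ₁(y)), and put Φ₁ := Φ − ψ₁, Φ₂ := Φ − ψ₂. Then there exists C₁ > 0, depending only on n, C₀ and M, such that for every h ∈ (0,1] and every measurable u : V → ℂ with ‖u‖_{L²_{Φ₁}(V)} < ∞: ‖Π̃u‖_{L²_{Φ₂}(V)} ≤ C₁ ‖u‖_{L²_{Φ₁}(V)}. -/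

import Mathlib

/-! Conjugated by the weights, `Π̃ : L²_{Φ−ψ₁} → L²_{Φ−ψ₂}` becomes an integral operator whose
kernel has modulus `h^{-n} |b(x,y)| exp((2 Re Ψ̃(x,y) − Φ(x) − Φ(y) + ψ₂(x) − ψ₁(y))/h)`. The upper
bound on `2 Re Ψ̃` and `ψ₂(x) ≤ |x−y|²/(2C₀) + ψ₁(y)` dominate it by the Gaussian
`h^{-n} M exp(−|x−y|²/(2C₀h))`, whose integral in either variable is `M (2πC₀)ⁿ` for every `h`.
Schur's test then bounds the operator norm by `C₁ = M (2πC₀)ⁿ`. -/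

open Complex MeasureTheory
open scoped ENNReal

noncomputable section

/-- `ℂⁿ` with its Euclidean (Hermitian) norm. -/
abbrev En (n : ℕ) := EuclideanSpace ℂ (Fin n)

instance (n : ℕ) : MeasurableSpace (En n) := borel _
instance (n : ℕ) : BorelSpace (En n) := ⟨rfl⟩
/-- The real inner product structure, giving Lebesgue measure (`volume`) on `ℂⁿ ≅ ℝ^{2n}`. -/
instance (n : ℕ) : InnerProductSpace ℝ (En n) := InnerProductSpace.rclikeToReal ℂ (En n)

/-- The (possibly infinite) weighted `L²` norm `‖u‖_{L²_Φ(V)}`. -/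
def wNormE (n : ℕ) (V : Set (En n)) (Φ : En n → ℝ) (h : ℝ) (u : En n → ℂ) : ENNReal :=
  (∫⁻ x in V, ENNReal.ofReal (‖u x‖ ^ 2 * Real.exp (-(2 * Φ x) / h))) ^ (1/2 : ℝ)

/-- The Bergman-type operator
`Π̃u(x) = h^{−n} ∫_V e^{(2/h)(Ψ̃(x,y) − Ψ̃(y,y))} b(x,y) u(y) dL(y)`. -/
def PiOp (n : ℕ) (V : Set (En n)) (Ψt b : En n → En n → ℂ) (h : ℝ)
    (u : En n → ℂ) (x : En n) : ℂ :=
  ((h ^ n : ℝ) : ℂ)⁻¹ *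
    ∫ y in V, Complex.exp (((2 / h : ℝ) : ℂ) * (Ψt x y - Ψt y y)) * b x y * u y

/-- The infimal convolution `ψ₂(x) = inf_{y∈V} (|x−y|²/(2C₀) + ψ₁(y))`. -/
def infConv (n : ℕ) (V : Set (En n)) (ψ₁ : En n → ℝ) (C₀ : ℝ) (x : En n) : ℝ :=
  ⨅ y : V, (‖x - (y : En n)‖ ^ 2 / (2 * C₀) + ψ₁ y)

section Schur

variable {α β : Type*} [MeasurableSpace α] [MeasurableSpace β]

theorem ENNReal.lintegral_mul_sq_le {μ : Measure α} {K W : α → ℝ≥0∞}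
    (hK : AEMeasurable K μ) (hW : AEMeasurable W μ) :
    (∫⁻ a, K a * W a ∂μ) ^ 2 ≤ (∫⁻ a, K a ∂μ) * ∫⁻ a, K a * W a ^ 2 ∂μ := by
  have half : (2⁻¹ : ℝ) + 2⁻¹ = 1 := by norm_num
  have hsplit : ∀ a, K a ^ (2⁻¹ : ℝ) * (K a * W a ^ 2) ^ (2⁻¹ : ℝ) = K a * W a := fun a => by
    rw [ENNReal.mul_rpow_of_nonneg _ _ (by norm_num), ← mul_assoc,
      ← ENNReal.rpow_add_of_nonneg _ _ (by norm_num) (by norm_num), half, ENNReal.rpow_one,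
      show (2⁻¹ : ℝ) = ((2 : ℕ) : ℝ)⁻¹ by norm_num, ENNReal.pow_rpow_inv_natCast two_ne_zero]
  have holder := ENNReal.lintegral_mul_norm_pow_le hK (hK.mul (hW.pow_const 2))
    (by norm_num) (by norm_num) half
  simp only [Pi.mul_apply, hsplit] at holder
  calc (∫⁻ a, K a * W a ∂μ) ^ 2
      ≤ ((∫⁻ a, K a ∂μ) ^ (2⁻¹ : ℝ) * (∫⁻ a, K a * W a ^ 2 ∂μ) ^ (2⁻¹ : ℝ)) ^ 2 := by
        gcongr
    _ = (∫⁻ a, K a ∂μ) * ∫⁻ a, K a * W a ^ 2 ∂μ := by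
        rw [mul_pow, show (2⁻¹ : ℝ) = ((2 : ℕ) : ℝ)⁻¹ by norm_num,
          ENNReal.rpow_inv_natCast_pow two_ne_zero, ENNReal.rpow_inv_natCast_pow two_ne_zero]

theorem ENNReal.lintegral_sq_lintegral_mul_le_of_schur {μ : Measure α} {ν : Measure β}
    [SFinite μ] [SFinite ν] {K : α → β → ℝ≥0∞} (hK : Measurable (Function.uncurry K))
    {W : β → ℝ≥0∞} (hW : AEMeasurable W ν) {C : ℝ≥0∞}
    (hrow : ∀ x, ∫⁻ y, K x y ∂ν ≤ C) (hcol : ∀ y, ∫⁻ x, K x y ∂μ ≤ C) :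
    ∫⁻ x, (∫⁻ y, K x y * W y ∂ν) ^ 2 ∂μ ≤ C ^ 2 * ∫⁻ y, W y ^ 2 ∂ν := by
  have hKW : AEMeasurable (Function.uncurry fun x y => K x y * W y ^ 2) (μ.prod ν) :=
    hK.aemeasurable.mul ((hW.pow_const 2).comp_quasiMeasurePreserving
      Measure.quasiMeasurePreserving_snd)
  calc ∫⁻ x, (∫⁻ y, K x y * W y ∂ν) ^ 2 ∂μ
      ≤ ∫⁻ x, C * ∫⁻ y, K x y * W y ^ 2 ∂ν ∂μ := by
        refine lintegral_mono fun x => ?_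
        have hKx : Measurable (K x) := hK.comp measurable_prodMk_left
        exact (lintegral_mul_sq_le hKx.aemeasurable hW).trans (by gcongr; exact hrow x)
    _ = C * ∫⁻ y, (∫⁻ x, K x y ∂μ) * W y ^ 2 ∂ν := by
        have hinner : AEMeasurable (fun x => ∫⁻ y, K x y * W y ^ 2 ∂ν) μ :=
          hKW.lintegral_prod_right'
        rw [lintegral_const_mul'' _ hinner, lintegral_lintegral_swap hKW]
        congr 1
        exact lintegral_congr fun y => lintegral_mul_const _ (hK.comp measurable_prodMk_right)
    _ ≤ C * ∫⁻ y, C * W y ^ 2 ∂ν := by gcongr with y; exact hcol y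
    _ = C ^ 2 * ∫⁻ y, W y ^ 2 ∂ν := by
        rw [lintegral_const_mul'' _ (hW.pow_const 2), ← mul_assoc, sq]

end Schur

theorem lintegral_ofReal_exp_neg_mul_norm_sub_sq {V : Type*} [NormedAddCommGroup V]
    [InnerProductSpace ℝ V] [FiniteDimensional ℝ V] [MeasurableSpace V] [BorelSpace V]
    {c : ℝ} (hc : 0 < c) (a : V) :
    ∫⁻ z, ENNReal.ofReal (Real.exp (-(c * ‖z - a‖ ^ 2)))
      = ENNReal.ofReal ((Real.pi / c) ^ (Module.finrank ℝ V / 2 : ℝ)) := by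
  have hval := GaussianFourier.integral_rexp_neg_mul_sq_norm (V := V) hc
  simp only [neg_mul] at hval
  have hint : Integrable fun v : V => Real.exp (-(c * ‖v‖ ^ 2)) :=
    .of_integral_ne_zero (by rw [hval]; positivity)
  rw [lintegral_sub_right_eq_self (fun z => ENNReal.ofReal (Real.exp (-(c * ‖z‖ ^ 2)))) a,
    ← ofReal_integral_eq_lintegral_ofReal hint (.of_forall fun _ => (Real.exp_pos _).le), hval]

theorem finrank_real_En (n : ℕ) : Module.finrank ℝ (En n) = 2 * n := by
  rw [← Module.finrank_mul_finrank ℝ ℂ (En n), Complex.finrank_real_complex,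
    finrank_euclideanSpace, Fintype.card_fin]

theorem lintegral_ofReal_exp_neg_norm_sub_sq_En {n : ℕ} {c : ℝ} (hc : 0 < c) (a : En n) :
    ∫⁻ z, ENNReal.ofReal (Real.exp (-(c * ‖z - a‖ ^ 2))) = ENNReal.ofReal ((Real.pi / c) ^ n) := by
  rw [lintegral_ofReal_exp_neg_mul_norm_sub_sq hc, finrank_real_En, Nat.cast_mul, Nat.cast_ofNat,
    mul_div_cancel_left₀ _ two_ne_zero, Real.rpow_natCast]

def gaussKernel (n : ℕ) (A c : ℝ) (x y : En n) : ℝ≥0∞ :=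
  ENNReal.ofReal (A * Real.exp (-(c * ‖x - y‖ ^ 2)))

theorem gaussKernel_comm (n : ℕ) (A c : ℝ) (x y : En n) :
    gaussKernel n A c x y = gaussKernel n A c y x := by
  rw [gaussKernel, gaussKernel, norm_sub_rev]

theorem measurable_uncurry_gaussKernel (n : ℕ) (A c : ℝ) :
    Measurable (Function.uncurry (gaussKernel n A c)) := by
  refine (ENNReal.continuous_ofReal.comp (continuous_const.mul
    (Real.continuous_exp.comp ?_))).measurable
  exact (continuous_const.mul ((continuous_fst.sub continuous_snd).norm.pow 2)).neg

theorem lintegral_gaussKernel {n : ℕ} {A c : ℝ} (hA : 0 ≤ A) (hc : 0 < c) (x : En n) :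
    ∫⁻ y, gaussKernel n A c x y = ENNReal.ofReal (A * (Real.pi / c) ^ n) := by
  simp_rw [gaussKernel, norm_sub_rev x, ENNReal.ofReal_mul hA]
  rw [lintegral_const_mul' _ _ ENNReal.ofReal_ne_top, lintegral_ofReal_exp_neg_norm_sub_sq_En hc]

theorem lintegral_sq_setLIntegral_gaussKernel_mul_le {n : ℕ} {V : Set (En n)} {A c : ℝ}
    (hA : 0 ≤ A) (hc : 0 < c) {W : En n → ℝ≥0∞} (hW : AEMeasurable W (volume.restrict V)) :
    ∫⁻ x in V, (∫⁻ y in V, gaussKernel n A c x y * W y) ^ 2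
      ≤ ENNReal.ofReal (A * (Real.pi / c) ^ n) ^ 2 * ∫⁻ y in V, W y ^ 2 :=
  ENNReal.lintegral_sq_lintegral_mul_le_of_schur (measurable_uncurry_gaussKernel n A c) hW
    (fun x => (setLIntegral_le_lintegral _ _).trans_eq (lintegral_gaussKernel hA hc x))
    (fun y => (setLIntegral_le_lintegral _ _).trans_eq <| by
      simp_rw [gaussKernel_comm n A c _ y]
      exact lintegral_gaussKernel hA hc y)

def weightedAbs {n : ℕ} (Φ : En n → ℝ) (h : ℝ) (u : En n → ℂ) (x : En n) : ℝ≥0∞ :=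
  ENNReal.ofReal (‖u x‖ * Real.exp (-Φ x / h))

theorem wNormE_eq_weightedAbs (n : ℕ) (V : Set (En n)) (Φ : En n → ℝ) (h : ℝ) (u : En n → ℂ) :
    wNormE n V Φ h u = (∫⁻ x in V, weightedAbs Φ h u x ^ 2) ^ (1 / 2 : ℝ) := by
  rw [wNormE]
  congr 1
  refine lintegral_congr fun x => ?_
  rw [weightedAbs, ← ENNReal.ofReal_pow (by positivity), mul_pow, ← Real.exp_nat_mul]
  ring_nf

theorem infConv_le {n : ℕ} {V : Set (En n)} {ψ₁ : En n → ℝ} {C₀ : ℝ} (hC₀ : 0 ≤ C₀)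
    (hψ₁ : ∀ y ∈ V, 0 ≤ ψ₁ y) (x : En n) {y : En n} (hy : y ∈ V) :
    infConv n V ψ₁ C₀ x ≤ ‖x - y‖ ^ 2 / (2 * C₀) + ψ₁ y := by
  refine ciInf_le ⟨0, ?_⟩ (⟨y, hy⟩ : V)
  rintro - ⟨z, rfl⟩
  have := hψ₁ z z.2
  positivity

theorem ofReal_norm_PiOp_mul_exp_le {n : ℕ} {V : Set (En n)} (hV : MeasurableSet V)
    {Ψt b : En n → En n → ℂ} {h : ℝ} (hh : 0 < h) (u : En n → ℂ) {Φ₁ Φ₂ : En n → ℝ}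
    {κ M : ℝ} {x : En n} (hbM : ∀ y ∈ V, ‖b x y‖ ≤ M)
    (hphase : ∀ y ∈ V, 2 * (Ψt x y).re - 2 * (Ψt y y).re - Φ₂ x + Φ₁ y ≤ -(κ * ‖x - y‖ ^ 2)) :
    ENNReal.ofReal (‖PiOp n V Ψt b h u x‖ * Real.exp (-Φ₂ x / h))
      ≤ ∫⁻ y in V, gaussKernel n ((h ^ n)⁻¹ * M) (κ / h) x y * weightedAbs Φ₁ h u y := by
  set F : En n → ℂ := fun y => Complex.exp (((2 / h : ℝ) : ℂ) * (Ψt x y - Ψt y y)) * b x y * u y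
  set a : ℝ := (h ^ n)⁻¹ * Real.exp (-Φ₂ x / h)
  have ha : 0 ≤ a := by positivity
  have hF : ∀ y ∈ V, a * ‖F y‖
      ≤ (h ^ n)⁻¹ * M * Real.exp (-(κ / h * ‖x - y‖ ^ 2)) * (‖u y‖ * Real.exp (-Φ₁ y / h)) := by
    intro y hy
    have hM : 0 ≤ M := (norm_nonneg _).trans (hbM y hy)
    have hexp : Real.exp (-Φ₂ x / h) * Real.exp (2 / h * ((Ψt x y).re - (Ψt y y).re))
        ≤ Real.exp (-(κ / h * ‖x - y‖ ^ 2)) * Real.exp (-Φ₁ y / h) := by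
      rw [← Real.exp_add, ← Real.exp_add, Real.exp_le_exp, ← sub_nonneg]
      exact (div_nonneg (sub_nonneg.2 (hphase y hy)) hh.le).trans_eq (by ring)
    simp only [a, F, norm_mul, Complex.norm_exp, Complex.re_ofReal_mul, Complex.sub_re]
    calc (h ^ n)⁻¹ * Real.exp (-Φ₂ x / h)
          * (Real.exp (2 / h * ((Ψt x y).re - (Ψt y y).re)) * ‖b x y‖ * ‖u y‖)
        = (h ^ n)⁻¹ * (‖b x y‖ * ‖u y‖)
          * (Real.exp (-Φ₂ x / h) * Real.exp (2 / h * ((Ψt x y).re - (Ψt y y).re))) := by ring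
      _ ≤ (h ^ n)⁻¹ * (M * ‖u y‖)
          * (Real.exp (-(κ / h * ‖x - y‖ ^ 2)) * Real.exp (-Φ₁ y / h)) := by
        gcongr
        exact hbM y hy
      _ = _ := by ring
  have hnorm : ‖PiOp n V Ψt b h u x‖ * Real.exp (-Φ₂ x / h) = a * ‖∫ y in V, F y‖ := by
    simp only [PiOp, a, F, norm_mul, norm_inv, Complex.norm_real, Real.norm_eq_abs,
      abs_of_pos (pow_pos hh n)]
    ring
  calc ENNReal.ofReal (‖PiOp n V Ψt b h u x‖ * Real.exp (-Φ₂ x / h))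
      = ENNReal.ofReal a * ‖∫ y in V, F y‖ₑ := by
        rw [hnorm, ENNReal.ofReal_mul ha, ofReal_norm]
    _ ≤ ENNReal.ofReal a * ∫⁻ y in V, ‖F y‖ₑ := by
        gcongr
        exact enorm_integral_le_lintegral_enorm _
    _ = ∫⁻ y in V, ENNReal.ofReal (a * ‖F y‖) := by
        rw [← lintegral_const_mul' _ _ ENNReal.ofReal_ne_top]
        simp_rw [ENNReal.ofReal_mul ha, ofReal_norm]
    _ ≤ _ := by
        refine setLIntegral_mono' hV fun y hy => ?_
        rw [gaussKernel, weightedAbs, ← ENNReal.ofReal_mul' (by positivity)]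
        exact ENNReal.ofReal_le_ofReal (hF y hy)

theorem wNormE_PiOp_le {n : ℕ} {V : Set (En n)} (hV : MeasurableSet V)
    {Ψt b : En n → En n → ℂ} {h : ℝ} (hh : 0 < h) {u : En n → ℂ} {Φ₁ Φ₂ : En n → ℝ}
    (hW : AEMeasurable (weightedAbs Φ₁ h u) (volume.restrict V)) {κ M : ℝ} (hκ : 0 < κ)
    (hM : 0 ≤ M) (hbM : ∀ x ∈ V, ∀ y ∈ V, ‖b x y‖ ≤ M)
    (hphase : ∀ x ∈ V, ∀ y ∈ V,
      2 * (Ψt x y).re - 2 * (Ψt y y).re - Φ₂ x + Φ₁ y ≤ -(κ * ‖x - y‖ ^ 2)) :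
    wNormE n V Φ₂ h (PiOp n V Ψt b h u)
      ≤ ENNReal.ofReal (M * (Real.pi / κ) ^ n) * wNormE n V Φ₁ h u := by
  have hconst : (h ^ n)⁻¹ * M * (Real.pi / (κ / h)) ^ n = M * (Real.pi / κ) ^ n := by
    field_simp
    ring
  rw [wNormE_eq_weightedAbs, wNormE_eq_weightedAbs, ← hconst]
  calc (∫⁻ x in V, weightedAbs Φ₂ h (PiOp n V Ψt b h u) x ^ 2) ^ (1 / 2 : ℝ)
      ≤ (∫⁻ x in V, (∫⁻ y in V,
          gaussKernel n ((h ^ n)⁻¹ * M) (κ / h) x y * weightedAbs Φ₁ h u y) ^ 2) ^ (1 / 2 : ℝ) := by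
        refine ENNReal.rpow_le_rpow (setLIntegral_mono' hV fun x hx => ?_) (by norm_num)
        gcongr
        exact ofReal_norm_PiOp_mul_exp_le hV hh u (hbM x hx) (hphase x hx)
    _ ≤ (ENNReal.ofReal ((h ^ n)⁻¹ * M * (Real.pi / (κ / h)) ^ n) ^ 2
          * ∫⁻ y in V, weightedAbs Φ₁ h u y ^ 2) ^ (1 / 2 : ℝ) := by
        gcongr
        exact lintegral_sq_setLIntegral_gaussKernel_mul_le (by positivity) (by positivity) hW
    _ = _ := by
        rw [ENNReal.mul_rpow_of_nonneg _ _ (by norm_num), ← ENNReal.rpow_natCast,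
          ← ENNReal.rpow_mul]
        norm_num

theorem statement17_general (n : ℕ)
    (V : Set (En n)) (hV : IsOpen V)
    (Φ : En n → ℝ) (hΦ : ContinuousOn Φ V)
    (Ψt : En n → En n → ℂ)
    (C₀ M : ℝ) (hC₀ : 0 < C₀) (hM : 0 < M)
    (hdiag : ∀ y ∈ V, (Ψt y y).re = Φ y)
    (hub : ∀ x ∈ V, ∀ y ∈ V, 2 * (Ψt x y).re ≤ Φ x + Φ y - (1/C₀) * ‖x - y‖ ^ 2)
    (b : En n → En n → ℂ)
    (hbM : ∀ x ∈ V, ∀ y ∈ V, ‖b x y‖ ≤ M)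
    (ψ₁ : En n → ℝ) (hψ₁cont : ContinuousOn ψ₁ V) (hψ₁nn : ∀ x ∈ V, 0 ≤ ψ₁ x) :
    ∃ C₁ : ℝ, 0 < C₁ ∧ ∀ h ∈ Set.Ioc (0:ℝ) 1, ∀ u : En n → ℂ, Measurable u →
      wNormE n V (fun x => Φ x - ψ₁ x) h u < ⊤ →
      wNormE n V (fun x => Φ x - infConv n V ψ₁ C₀ x) h (PiOp n V Ψt b h u)
        ≤ ENNReal.ofReal C₁ * wNormE n V (fun x => Φ x - ψ₁ x) h u := by
  refine ⟨M * (2 * Real.pi * C₀) ^ n, by positivity, fun h ⟨hh, _⟩ u hu _ => ?_⟩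
  have hW : AEMeasurable (weightedAbs (fun x => Φ x - ψ₁ x) h u) (volume.restrict V) :=
    ENNReal.measurable_ofReal.comp_aemeasurable <| hu.norm.aemeasurable.mul <|
      (Real.continuous_exp.comp_continuousOn ((hΦ.sub hψ₁cont).neg.div_const h)).aemeasurable
        hV.measurableSet
  have hphase : ∀ x ∈ V, ∀ y ∈ V, 2 * (Ψt x y).re - 2 * (Ψt y y).re
      - (Φ x - infConv n V ψ₁ C₀ x) + (Φ y - ψ₁ y) ≤ -((2 * C₀)⁻¹ * ‖x - y‖ ^ 2) := by
    intro x hx y hy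
    have hinf := infConv_le hC₀.le hψ₁nn x hy
    have hq : 1 / C₀ * ‖x - y‖ ^ 2 = 2 * ((2 * C₀)⁻¹ * ‖x - y‖ ^ 2) := by ring
    rw [div_eq_inv_mul] at hinf
    linarith [hub x hx y hy, hdiag y hy]
  convert wNormE_PiOp_le hV.measurableSet hh hW (by positivity) hM.le hbM hphase using 3
  field_simp

/-- the Bergman-type operator `Π̃` is `O(1) : L²_{Φ−ψ₁}(V) → L²_{Φ−ψ₂}(V)`,
where `ψ₂` is the infimal convolution of `ψ₁` with `|·|²/(2C₀)`. -/
theorem statement17 (n : ℕ)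
    (V : Set (En n)) (hV : IsOpen V) (hVb : Bornology.IsBounded V)
    (Φ : En n → ℝ) (hΦ : ContinuousOn Φ V)
    (Ψt : En n → En n → ℂ)
    (hΨt : ContinuousOn (fun p : En n × En n => Ψt p.1 p.2) (V ×ˢ V))
    (C₀ M : ℝ) (hC₀ : 0 < C₀) (hM : 0 < M)
    (hdiag : ∀ y ∈ V, (Ψt y y).re = Φ y)
    (hub : ∀ x ∈ V, ∀ y ∈ V, 2 * (Ψt x y).re ≤ Φ x + Φ y - (1/C₀) * ‖x - y‖ ^ 2)
    (b : En n → En n → ℂ) (hb : Measurable fun p : En n × En n => b p.1 p.2)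
    (hbM : ∀ x ∈ V, ∀ y ∈ V, ‖b x y‖ ≤ M)
    (ψ₁ : En n → ℝ) (hψ₁cont : ContinuousOn ψ₁ V) (hψ₁nn : ∀ x ∈ V, 0 ≤ ψ₁ x) :
    ∃ C₁ : ℝ, 0 < C₁ ∧ ∀ h ∈ Set.Ioc (0:ℝ) 1, ∀ u : En n → ℂ, Measurable u →
      wNormE n V (fun x => Φ x - ψ₁ x) h u < ⊤ →
      wNormE n V (fun x => Φ x - infConv n V ψ₁ C₀ x) h (PiOp n V Ψt b h u)
        ≤ ENNReal.ofReal C₁ * wNormE n V (fun x => Φ x - ψ₁ x) h u :=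
  statement17_general n V hV Φ hΦ Ψt C₀ M hC₀ hM hdiag hub b hbM ψ₁ hψ₁cont hψ₁nn

end
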